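/- Invariance of the Gibbs distribution under Swendsen–Wang: with K(s,t) = Σ_{w : E(G)→{0,1}} P(s,w) · Q(w,t), for every spin configuration t on a finite simple graph G one has Σ_{s : V→{−1,+1}} W_V(s) · K(s,t) = W_V(t). -/

import Mathlib

open Classical

noncomputable section

variable {V : Type*} [Fintype V] [DecidableEq V]

/-- Product `s i * s j` of spins over an unordered edge `{i, j}`. -/
def pairProd (s : V → ℝ) : Sym2 V → ℝ :=
  Sym2.lift ⟨fun i j => s i * s j, fun _ _ => mul_comm _ _⟩

/-- Unnormalized Gibbs weight
`W_V(s) = exp (β Σ_{{i,j} ∈ E} s_i s_j + β Σ_i h_i s_i)`. -/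
def WV (G : SimpleGraph V) [DecidableRel G.Adj] (β : ℝ) (h : V → ℝ) (s : V → ℝ) : ℝ :=
  Real.exp (β * ∑ e ∈ G.edgeFinset, pairProd s e + β * ∑ i : V, h i * s i)

/-- Edge factor of the joint vertex-edge weight:
`(1 - e^{-2β})` if `w_{ij} = 1` and `s_i = s_j`, `e^{-2β}` if `w_{ij} = 0`, else `0`. -/
def edgeFactorVE (β : ℝ) (s : V → ℝ) (b : Bool) : Sym2 V → ℝ :=
  Sym2.lift ⟨fun i j =>
    if b then (if s i = s j then 1 - Real.exp (-2 * β) else 0) else Real.exp (-2 * β),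
    by intro i j; by_cases hb : b <;> simp [hb, eq_comm]⟩

/-- Unnormalized joint vertex-edge weight `W_VE(s, w)`. -/
def WVE (G : SimpleGraph V) [DecidableRel G.Adj] (β : ℝ) (h : V → ℝ) (s : V → ℝ)
    (w : G.edgeSet → Bool) : ℝ :=
  (∏ e : G.edgeSet, edgeFactorVE β s (w e) e.val) * Real.exp (β * ∑ i : V, h i * s i)

/-- Edge factor of the Swendsen-Wang edge-step probability: if `s_i = s_j` then
`(1 - e^{-2β})` for `w_{ij} = 1` and `e^{-2β}` for `w_{ij} = 0`; otherwise `0` for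
`w_{ij} = 1` and `1` for `w_{ij} = 0`. -/
def edgeFactorP (β : ℝ) (s : V → ℝ) (b : Bool) : Sym2 V → ℝ :=
  Sym2.lift ⟨fun i j =>
    if s i = s j then (if b then 1 - Real.exp (-2 * β) else Real.exp (-2 * β))
    else (if b then 0 else 1),
    by intro i j; simp [eq_comm]⟩

/-- Swendsen-Wang edge-step probability `P(s, w)`. -/
def swP (G : SimpleGraph V) [DecidableRel G.Adj] (β : ℝ) (s : V → ℝ)
    (w : G.edgeSet → Bool) : ℝ :=
  ∏ e : G.edgeSet, edgeFactorP β s (w e) e.val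

/-- Spanning subgraph of `G` whose edges are the edges `e` with `w e = 1`. -/
def openSubgraph (G : SimpleGraph V) [DecidableRel G.Adj] (w : G.edgeSet → Bool) :
    SimpleGraph V where
  Adj i j := ∃ hij : G.Adj i j, w ⟨Sym2.mk i j, G.mem_edgeSet.mpr hij⟩ = true
  symm := ⟨by
    rintro i j ⟨hij, hw⟩
    refine ⟨hij.symm, ?_⟩
    have he : (⟨Sym2.mk j i, G.mem_edgeSet.mpr hij.symm⟩ : G.edgeSet)
        = ⟨Sym2.mk i j, G.mem_edgeSet.mpr hij⟩ := Subtype.ext (Sym2.eq_swap)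
    rw [he]; exact hw⟩
  loopless := ⟨by rintro i ⟨hij, -⟩; exact G.loopless.irrefl i hij⟩

/-- `h_γ = Σ_{i ∈ γ} h_i`: sum of the field over a connected component `γ ∈ C_w`. -/
def hComp (G : SimpleGraph V) [DecidableRel G.Adj] (h : V → ℝ) (w : G.edgeSet → Bool)
    (γ : (openSubgraph G w).ConnectedComponent) : ℝ :=
  ∑ i ∈ Finset.univ.filter (fun i => (openSubgraph G w).connectedComponentMk i = γ), h i

/-- A configuration is compatible with the edge configuration `w` if it is constant on each
connected component of the subgraph of open edges. -/
def Compatible (G : SimpleGraph V) [DecidableRel G.Adj] (w : G.edgeSet → Bool)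
    (t : V → ℝ) : Prop :=
  ∀ i j : V, (openSubgraph G w).connectedComponentMk i = (openSubgraph G w).connectedComponentMk j
    → t i = t j

/-- Swendsen-Wang spin-step probability `Q(w, t)`: for `t` compatible with `w`, the product
over components `γ ∈ C_w` of `e^{β h_γ τ_γ} / (e^{β h_γ} + e^{-β h_γ})`, where
`τ_γ = t γ.out` is the common value of `t` on `γ`; and `0` for incompatible `t`. -/
def swQ (G : SimpleGraph V) [DecidableRel G.Adj] (β : ℝ) (h : V → ℝ) (w : G.edgeSet → Bool)
    (t : V → ℝ) : ℝ :=
  if Compatible G w t then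
    ∏ γ : (openSubgraph G w).ConnectedComponent,
      Real.exp (β * hComp G h w γ * t γ.out) /
        (Real.exp (β * hComp G h w γ) + Real.exp (-(β * hComp G h w γ)))
  else 0

/-- Unnormalized edge weight
`W_E(w) = Π_{w_e = 1} (1 - e^{-2β}) · Π_{w_e = 0} e^{-2β} · Π_{γ ∈ C_w} (e^{β h_γ} + e^{-β h_γ})`. -/
def WE (G : SimpleGraph V) [DecidableRel G.Adj] (β : ℝ) (h : V → ℝ)
    (w : G.edgeSet → Bool) : ℝ :=
  (∏ _e ∈ Finset.univ.filter (fun e : G.edgeSet => w e = true), (1 - Real.exp (-2 * β))) *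
  (∏ _e ∈ Finset.univ.filter (fun e : G.edgeSet => w e = false), Real.exp (-2 * β)) *
  ∏ γ : (openSubgraph G w).ConnectedComponent,
    (Real.exp (β * hComp G h w γ) + Real.exp (-(β * hComp G h w γ)))

end

/-!
Put the Edwards–Sokal joint weight `W_VE(s, w)` on spins and bonds. Each edge satisfies
`e^{β s_i s_j} P_e(s, w_e) = e^{β} W_VE,e(s, w_e)`, so `W_V(s) P(s, w) = e^{β|E|} W_VE(s, w)`.
Summing `W_VE` over spins constant on the clusters of `w` gives `W_E(w)`, and `Q(w, ·)` is
exactly `W_VE(·, w) / W_E(w)`; summing `W_VE(t, ·)` over bonds returns `e^{-β|E|} W_V(t)`.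
Hence `Σ_s W_V(s) K(s, t) = e^{β|E|} Σ_w W_E(w) Q(w, t) = e^{β|E|} Σ_w W_VE(t, w) = W_V(t)`.
-/

open Real Finset

section

variable {V : Type*} (β : ℝ)

lemma spin_mul_spin {a b : ℝ} (ha : a = 1 ∨ a = -1) (hb : b = 1 ∨ b = -1) :
    a * b = if a = b then 1 else -1 := by
  rcases ha with rfl | rfl <;> rcases hb with rfl | rfl <;> norm_num

lemma exp_pairProd_mul_edgeFactorP {s : V → ℝ} (hs : ∀ i, s i = 1 ∨ s i = -1) (b : Bool)
    (e : Sym2 V) :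
    exp (β * pairProd s e) * edgeFactorP β s b e = exp β * edgeFactorVE β s b e := by
  induction e using Sym2.ind with
  | _ i j =>
    simp only [pairProd, edgeFactorP, edgeFactorVE, Sym2.lift_mk, spin_mul_spin (hs i) (hs j)]
    split_ifs <;> simp only [mul_one, mul_zero, mul_neg, ← exp_add]
    ring_nf

lemma sum_edgeFactorVE {s : V → ℝ} (hs : ∀ i, s i = 1 ∨ s i = -1) (e : Sym2 V) :
    ∑ b : Bool, edgeFactorVE β s b e = exp (-β) * exp (β * pairProd s e) := by
  induction e using Sym2.ind with
  | _ i j =>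
    simp only [Fintype.sum_bool, pairProd, edgeFactorVE, Sym2.lift_mk, if_true,
      Bool.false_eq_true, if_false, spin_mul_spin (hs i) (hs j)]
    split_ifs <;> simp only [mul_one, mul_neg_one, sub_add_cancel, zero_add, ← exp_add,
      neg_add_cancel, exp_zero]
    ring_nf

lemma exists_openSubgraph_adj_ne_of_not_compatible {G : SimpleGraph V} [DecidableRel G.Adj]
    {w : G.edgeSet → Bool} {s : V → ℝ}
    (hs : ¬ Compatible G w s) : ∃ a b, (openSubgraph G w).Adj a b ∧ s a ≠ s b := by
  simp only [Compatible, not_forall] at hs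
  obtain ⟨i, j, hij, hne⟩ := hs
  obtain ⟨p⟩ := SimpleGraph.ConnectedComponent.exact hij
  obtain ⟨d, -, hd, hd'⟩ := p.exists_boundary_dart {x | s x = s i} rfl (Ne.symm hne)
  exact ⟨d.fst, d.snd, d.adj, fun heq => hd' (heq.symm.trans hd)⟩

lemma SimpleGraph.ConnectedComponent.connectedComponentMk_out {G : SimpleGraph V}
    (C : G.ConnectedComponent) : G.connectedComponentMk C.out = C :=
  C.out_eq

lemma compatible_comp_connectedComponentMk {G : SimpleGraph V} [DecidableRel G.Adj]
    (w : G.edgeSet → Bool) (σ : (openSubgraph G w).ConnectedComponent → ℝ) :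
    Compatible G w (fun i => σ ((openSubgraph G w).connectedComponentMk i)) :=
  fun _ _ hij => congrArg σ hij

end

section Bonds

variable {V : Type*} [Fintype V] (G : SimpleGraph V) [DecidableRel G.Adj] (β : ℝ) (h : V → ℝ)

lemma prod_edgeFactorVE_eq_zero {w : G.edgeSet → Bool} {s : V → ℝ}
    (hs : ¬ Compatible G w s) : ∏ e : G.edgeSet, edgeFactorVE β s (w e) e = 0 := by
  obtain ⟨a, b, ⟨hab, hw⟩, hne⟩ := exists_openSubgraph_adj_ne_of_not_compatible hs
  refine prod_eq_zero (mem_univ ⟨s(a, b), G.mem_edgeSet.mpr hab⟩) ?_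
  simp [hw, edgeFactorVE, hne]

noncomputable def bondWeight (w : G.edgeSet → Bool) : ℝ :=
  ∏ e : G.edgeSet, if w e then 1 - exp (-2 * β) else exp (-2 * β)

lemma prod_edgeFactorVE_of_compatible {w : G.edgeSet → Bool} {s : V → ℝ}
    (hs : Compatible G w s) : ∏ e : G.edgeSet, edgeFactorVE β s (w e) e = bondWeight G β w := by
  refine prod_congr rfl fun ⟨e, he⟩ _ => ?_
  induction e using Sym2.ind with
  | _ i j =>
    cases hw : w ⟨s(i, j), he⟩
    · simp [edgeFactorVE]
    · have hadj : (openSubgraph G w).Adj i j := ⟨G.mem_edgeSet.mp he, hw⟩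
      have hij := hs i j (SimpleGraph.ConnectedComponent.connectedComponentMk_eq_of_adj hadj)
      simp [edgeFactorVE, hij]

lemma WV_eq_prod (s : V → ℝ) :
    WV G β h s = (∏ e : G.edgeSet, exp (β * pairProd s e)) * exp (β * ∑ i, h i * s i) := by
  rw [WV, exp_add, SimpleGraph.edgeFinset, ← sum_set_coe, mul_sum, exp_sum]

lemma WV_mul_swP {s : V → ℝ} (hs : ∀ i, s i = 1 ∨ s i = -1) (w : G.edgeSet → Bool) :
    WV G β h s * swP G β s w = exp (β * Fintype.card G.edgeSet) * WVE G β h s w := by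
  have hedges : (∏ e : G.edgeSet, exp (β * pairProd s e)) * swP G β s w =
      exp (β * Fintype.card G.edgeSet) * ∏ e : G.edgeSet, edgeFactorVE β s (w e) e := by
    simp_rw [swP, ← prod_mul_distrib, exp_pairProd_mul_edgeFactorP β hs]
    rw [prod_mul_distrib, prod_const, card_univ, ← exp_nat_mul, mul_comm β]
  rw [WV_eq_prod, WVE, mul_right_comm, hedges, mul_assoc]

end Bonds

section Clusters

variable {V : Type*} [Fintype V] [DecidableEq V] (G : SimpleGraph V) [DecidableRel G.Adj]
  (β : ℝ) (h : V → ℝ)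

lemma WE_eq_bondWeight_mul (w : G.edgeSet → Bool) :
    WE G β h w = bondWeight G β w *
      ∏ γ, (exp (β * hComp G h w γ) + exp (-(β * hComp G h w γ))) := by
  simp only [WE, bondWeight, prod_ite, Bool.not_eq_true]

lemma sum_mul_eq_sum_hComp_mul {w : G.edgeSet → Bool} {s : V → ℝ} (hs : Compatible G w s) :
    ∑ i, h i * s i = ∑ γ, hComp G h w γ * s γ.out := by
  rw [← sum_fiberwise univ (openSubgraph G w).connectedComponentMk]
  refine sum_congr rfl fun γ _ => ?_
  rw [hComp, sum_mul]
  refine sum_congr rfl fun i hi => ?_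
  rw [hs i γ.out ((mem_filter.mp hi).2.trans γ.out_eq.symm)]

lemma WVE_of_compatible {w : G.edgeSet → Bool} {s : V → ℝ} (hs : Compatible G w s) :
    WVE G β h s w = bondWeight G β w * ∏ γ, exp (β * hComp G h w γ * s γ.out) := by
  rw [WVE, prod_edgeFactorVE_of_compatible G β hs, sum_mul_eq_sum_hComp_mul G h hs, mul_sum,
    exp_sum]
  simp only [mul_assoc]

lemma WE_mul_swQ (w : G.edgeSet → Bool) (t : V → ℝ) :
    WE G β h w * swQ G β h w t = WVE G β h t w := by
  by_cases ht : Compatible G w t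
  · rw [swQ, if_pos ht, WE_eq_bondWeight_mul, WVE_of_compatible G β h ht, mul_assoc,
      ← prod_mul_distrib]
    congr 1
    exact prod_congr rfl fun γ _ => mul_div_cancel₀ _ (by positivity)
  · rw [swQ, if_neg ht, mul_zero, WVE, prod_edgeFactorVE_eq_zero G β ht, zero_mul]

lemma sum_WVE_eq_sum_clusters (S : Finset ℝ) (w : G.edgeSet → Bool) :
    ∑ s : V → S, WVE G β h (fun i => (s i : ℝ)) w =
      ∑ σ : (openSubgraph G w).ConnectedComponent → S,
        WVE G β h (fun i => (σ ((openSubgraph G w).connectedComponentMk i) : ℝ)) w := by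
  rw [← sum_filter_of_ne (p := fun s : V → S => Compatible G w (fun i => (s i : ℝ)))]
  · refine sum_nbij' (fun s γ => s γ.out)
      (fun σ i => σ ((openSubgraph G w).connectedComponentMk i))
      (fun _ _ => mem_univ _) (fun σ _ => ?_) (fun s hs => ?_) (fun σ _ => ?_) (fun s hs => ?_)
    · exact mem_filter.mpr ⟨mem_univ _, compatible_comp_connectedComponentMk w fun γ => σ γ⟩
    · have hs' := (mem_filter.mp hs).2
      exact funext fun i => Subtype.ext (hs' _ i ((openSubgraph G w).connectedComponentMk i).out_eq)
    · exact funext fun γ => congrArg σ γ.out_eq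
    · refine congrArg (fun f => WVE G β h f w) (funext fun i => ?_)
      exact (mem_filter.mp hs).2 i _ ((openSubgraph G w).connectedComponentMk i).out_eq.symm
  · intro s _ hs
    by_contra hc
    exact hs (by rw [WVE, prod_edgeFactorVE_eq_zero G β hc, zero_mul])

lemma sum_WVE_spins (w : G.edgeSet → Bool) :
    ∑ s : V → ({-1, 1} : Finset ℝ), WVE G β h (fun i => (s i : ℝ)) w = WE G β h w := by
  rw [sum_WVE_eq_sum_clusters, WE_eq_bondWeight_mul]
  have hcluster (σ : (openSubgraph G w).ConnectedComponent → ({-1, 1} : Finset ℝ)) :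
      WVE G β h (fun i => (σ ((openSubgraph G w).connectedComponentMk i) : ℝ)) w =
        bondWeight G β w * ∏ γ, exp (β * hComp G h w γ * σ γ) := by
    rw [WVE_of_compatible G β h (compatible_comp_connectedComponentMk w fun γ => (σ γ : ℝ))]
    simp only [SimpleGraph.ConnectedComponent.connectedComponentMk_out]
  simp_rw [hcluster, ← mul_sum]
  rw [← Fintype.prod_sum fun γ (x : ({-1, 1} : Finset ℝ)) => exp (β * hComp G h w γ * x)]
  refine congrArg _ (prod_congr rfl fun γ _ => ?_)
  rw [sum_coe_sort _ (fun x => exp (β * hComp G h w γ * x)), sum_pair (by norm_num)]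
  ring_nf

lemma sum_WVE_edges {s : V → ℝ} (hs : ∀ i, s i = 1 ∨ s i = -1) :
    ∑ w : G.edgeSet → Bool, WVE G β h s w =
      exp (-(β * Fintype.card G.edgeSet)) * WV G β h s := by
  simp only [WVE, ← sum_mul]
  rw [← Fintype.prod_sum fun (e : G.edgeSet) b => edgeFactorVE β s b e]
  simp_rw [sum_edgeFactorVE β hs]
  rw [prod_mul_distrib, prod_const, card_univ, ← exp_nat_mul, WV_eq_prod, mul_assoc]
  ring_nf

end Clusters

variable {V : Type*} [Fintype V] [DecidableEq V]

theorem swendsenWang_invariant_general (G : SimpleGraph V) [DecidableRel G.Adj]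
    (β : ℝ) (h : V → ℝ) (t : V → ℝ) (ht : ∀ i, t i = 1 ∨ t i = -1) :
    ∑ s : V → ({-1, 1} : Finset ℝ),
      WV G β h (fun i => (s i : ℝ)) *
        (∑ w : G.edgeSet → Bool, swP G β (fun i => (s i : ℝ)) w * swQ G β h w t)
      = WV G β h t := by
  have hspin (s : V → ({-1, 1} : Finset ℝ)) (i : V) : (s i : ℝ) = 1 ∨ (s i : ℝ) = -1 :=
    ((mem_insert.mp (s i).2).imp_right mem_singleton.mp).symm
  have hjoint (s : V → ({-1, 1} : Finset ℝ)) (w : G.edgeSet → Bool) :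
      WV G β h (s ·) * swP G β (s ·) w =
        exp (β * Fintype.card G.edgeSet) * WVE G β h (s ·) w :=
    WV_mul_swP G β h (hspin s) w
  calc _ = ∑ s : V → ({-1, 1} : Finset ℝ), ∑ w : G.edgeSet → Bool,
        exp (β * Fintype.card G.edgeSet) * (WVE G β h (s ·) w * swQ G β h w t) := by
        simp_rw [mul_sum, ← mul_assoc, hjoint]
    _ = exp (β * Fintype.card G.edgeSet) * ∑ w : G.edgeSet → Bool,
        (∑ s : V → ({-1, 1} : Finset ℝ), WVE G β h (s ·) w) * swQ G β h w t := by
        simp only [mul_sum, sum_mul]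
        exact sum_comm
    _ = exp (β * Fintype.card G.edgeSet) * ∑ w : G.edgeSet → Bool, WVE G β h t w := by
        simp_rw [sum_WVE_spins, WE_mul_swQ]
    _ = WV G β h t := by
        rw [sum_WVE_edges G β h ht, ← mul_assoc, ← exp_add, add_neg_cancel, exp_zero, one_mul]

/-- Invariance of the Gibbs distribution under the Swendsen-Wang kernel
`K(s, t) = Σ_w P(s, w) · Q(w, t)`: for every spin configuration `t`,
`Σ_{s : V → {-1,+1}} W_V(s) · K(s, t) = W_V(t)`. -/
theorem swendsenWang_invariant (G : SimpleGraph V) [DecidableRel G.Adj]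
    (β : ℝ) (hβ : 0 < β) (h : V → ℝ) (t : V → ℝ) (ht : ∀ i, t i = 1 ∨ t i = -1) :
    ∑ s : V → ({-1, 1} : Finset ℝ),
      WV G β h (fun i => (s i : ℝ)) *
        (∑ w : G.edgeSet → Bool, swP G β (fun i => (s i : ℝ)) w * swQ G β h w t)
      = WV G β h t :=
  swendsenWang_invariant_general G β h t ht
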